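/- Let (X, M) be an m-complete multi-normed vector lattice with the pre-Lebesgue property. Then X has the Lebesgue and Levi properties if and only if every m-bounded um-closed subset of X is um-complete. -/

import Mathlib

open Filter Topology

/-!
The Lebesgue property comes for free: a net `x ↓ 0` is m-Cauchy by the pre-Lebesgue property,
hence m-convergent, and its m-limit is its infimum `0`.

The key estimate, for `a, b, u ≥ 0`, is
`m (|a - b| ⊓ u) ≤ m (a ⊓ n • u - b ⊓ n • u) + (m a + m b) / (n + 1)`:
for m-bounded positive nets, um-convergence (um-Cauchyness) follows from m-convergence
(m-Cauchyness) of all truncations `z ⊓ w`.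

If `X` is Levi and `z ≥ 0` is m-bounded and um-Cauchy, each `z ⊓ w` is m-Cauchy with an m-limit
`t w`; the Levi property gives `p = sup_w t w`, and infinite distributivity gives `p ⊓ w = t w`,
so `z → p` in um. A general net is split into positive and negative parts, and the limit stays
in the um-closed set. Conversely, an increasing m-bounded net `x ≥ 0` has order bounded increasing
truncations, which are m-Cauchy by the pre-Lebesgue property; so `x` is um-Cauchy in the m-bounded
um-closed set `⋂ l, {y | m l y ≤ M l}`, and its um-limit is its supremum.
-/

/-- The um-topology generated by a family of lattice seminorms. -/
def umTop {X : Type*} [AddCommGroup X] [Lattice X] {Λ : Type*} (m : Λ → X → ℝ) :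
    TopologicalSpace X :=
  TopologicalSpace.generateFrom
    {s | ∃ (z : X) (ε : ℝ) (l : Λ) (u : X), 0 < ε ∧ 0 ≤ u ∧
          s = {y : X | m l (|y - z| ⊓ u) < ε}}

section LatticeOrderedGroup

variable {X : Type*} [Lattice X] [AddCommGroup X] [AddLeftMono X]

theorem posPart_le_abs (a : X) : a⁺ ≤ |a| :=
  sup_le (le_abs_self a) (abs_nonneg a)

theorem negPart_le_abs (a : X) : a⁻ ≤ |a| := by
  simpa [posPart_neg] using posPart_le_abs (-a)

theorem abs_posPart_sub_posPart_le (a b : X) : |a⁺ - b⁺| ≤ |a - b| :=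
  abs_sup_sub_sup_le_abs a b 0

theorem abs_negPart_sub_negPart_le (a b : X) : |a⁻ - b⁻| ≤ |a - b| := by
  simpa [posPart_neg, neg_add_eq_sub, abs_sub_comm] using abs_posPart_sub_posPart_le (-a) (-b)

theorem add_inf_le_inf_add_inf {a b c : X} (ha : 0 ≤ a) (hb : 0 ≤ b) (hc : 0 ≤ c) :
    (a + b) ⊓ c ≤ a ⊓ c + b ⊓ c := by
  rw [add_inf, inf_add, inf_add]
  exact le_inf (le_inf inf_le_left (inf_le_right.trans (le_add_of_nonneg_right hb)))
    (le_inf (inf_le_right.trans (le_add_of_nonneg_left ha))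
      (inf_le_right.trans (le_add_of_nonneg_left hc)))

theorem abs_inf_sub_inf_le_inf {a b c : X} (ha : 0 ≤ a) (hb : 0 ≤ b) (hc : 0 ≤ c) :
    |a ⊓ c - b ⊓ c| ≤ |a - b| ⊓ c := by
  refine le_inf (abs_inf_sub_inf_le_abs a b c) (abs_le'.2 ⟨?_, ?_⟩)
  · exact (sub_le_self _ (le_inf hb hc)).trans inf_le_right
  · exact neg_sub (a ⊓ c) (b ⊓ c) ▸ (sub_le_self _ (le_inf ha hc)).trans inf_le_right

theorem abs_sub_le_abs_inf_sub_inf_add (a b v : X) :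
    |a - b| ≤ |a ⊓ v - b ⊓ v| + (a - v)⁺ + (b - v)⁺ := by
  have h : a - b = (a ⊓ v - b ⊓ v) + (a - v)⁺ + -(b - v)⁺ := by
    rw [inf_eq_sub_posPart_sub a, inf_eq_sub_posPart_sub b]; abel
  rw [h]
  refine (abs_add_le _ _).trans (add_le_add ((abs_add_le _ _).trans ?_) ?_)
  · rw [abs_of_nonneg (posPart_nonneg _)]
  · rw [abs_neg, abs_of_nonneg (posPart_nonneg _)]

/-- Layer cake: the layers `(w - k • u)⁺ ⊓ u = w ⊓ (k + 1) • u - w ⊓ k • u` decrease in `k` and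
add up to `w ⊓ (n + 1) • u ≤ w`. -/
theorem nsmul_posPart_sub_nsmul_inf_le {w u : X} (hw : 0 ≤ w) (hu : 0 ≤ u) (n : ℕ) :
    (n + 1) • ((w - n • u)⁺ ⊓ u) ≤ w := by
  have layer (k : ℕ) : w ⊓ k • u + (w - k • u)⁺ ⊓ u = w ⊓ (k + 1) • u := by
    rw [show (w - k • u)⁺ = w - w ⊓ k • u by rw [inf_eq_sub_posPart_sub, sub_sub_cancel],
      add_inf, add_sub_cancel, inf_add, ← inf_assoc, inf_eq_left.2 (le_add_of_nonneg_right hu),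
      succ_nsmul]
  have key (k : ℕ) (hk : k ≤ n + 1) : k • ((w - n • u)⁺ ⊓ u) ≤ w ⊓ k • u := by
    induction k with
    | zero => simpa using hw
    | succ k ih =>
      calc (k + 1) • ((w - n • u)⁺ ⊓ u) = k • ((w - n • u)⁺ ⊓ u) + (w - n • u)⁺ ⊓ u :=
            succ_nsmul _ k
        _ ≤ w ⊓ k • u + (w - k • u)⁺ ⊓ u :=
            add_le_add (ih (by omega)) (inf_le_inf_right u (posPart_mono
              (sub_le_sub_left (nsmul_le_nsmul_left hu (by omega)) w)))
        _ = w ⊓ (k + 1) • u := layer k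
  exact (key (n + 1) le_rfl).trans inf_le_left

theorem IsLUB.range_inf {ι : Sort*} {f : ι → X} {a : X} (h : IsLUB (Set.range f) a) (c : X) :
    IsLUB (Set.range fun i => f i ⊓ c) (a ⊓ c) := by
  refine ⟨?_, fun w hw => ?_⟩
  · rintro _ ⟨i, rfl⟩
    exact inf_le_inf_right c (h.1 ⟨i, rfl⟩)
  · have : a ≤ w + (a - c)⁺ := h.2 <| by
      rintro _ ⟨i, rfl⟩
      calc f i = f i ⊓ c + (f i - c)⁺ := by rw [inf_eq_sub_posPart_sub, sub_add_cancel]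
        _ ≤ w + (a - c)⁺ :=
          add_le_add (hw ⟨i, rfl⟩) (posPart_mono (sub_le_sub_right (h.1 ⟨i, rfl⟩) c))
    rwa [inf_eq_sub_posPart_sub, sub_le_iff_le_add]

end LatticeOrderedGroup

structure IsLatticeSeminorm {X : Type*} [AddCommGroup X] [Lattice X] [Module ℝ X] (p : X → ℝ) :
    Prop where
  add_le : ∀ x y, p (x + y) ≤ p x + p y
  smul : ∀ (c : ℝ) x, p (c • x) = |c| * p x
  mono_abs : ∀ x y, |x| ≤ |y| → p x ≤ p y

namespace IsLatticeSeminorm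

variable {X : Type*} [AddCommGroup X] [Lattice X] [Module ℝ X] {p : X → ℝ}

theorem map_zero (hp : IsLatticeSeminorm p) : p 0 = 0 := by
  simpa using hp.smul 0 0

theorem map_neg (hp : IsLatticeSeminorm p) (x : X) : p (-x) = p x := by
  simpa using hp.smul (-1) x

theorem map_sub_comm (hp : IsLatticeSeminorm p) (x y : X) : p (x - y) = p (y - x) := by
  rw [← neg_sub, hp.map_neg]

theorem nonneg (hp : IsLatticeSeminorm p) (x : X) : 0 ≤ p x := by
  have := hp.add_le x (-x)
  rw [add_neg_cancel, hp.map_zero, hp.map_neg] at this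
  linarith

theorem map_nsmul (hp : IsLatticeSeminorm p) (n : ℕ) (x : X) : p (n • x) = n * p x := by
  rw [← Nat.cast_smul_eq_nsmul ℝ, hp.smul, abs_of_nonneg n.cast_nonneg]

theorem le_map_add_map_sub (hp : IsLatticeSeminorm p) (x y : X) : p x ≤ p y + p (x - y) := by
  simpa using hp.add_le y (x - y)

variable [AddLeftMono X]

theorem map_abs (hp : IsLatticeSeminorm p) (x : X) : p |x| = p x :=
  le_antisymm (hp.mono_abs _ _ (abs_abs x).le) (hp.mono_abs _ _ (abs_abs x).ge)

theorem mono (hp : IsLatticeSeminorm p) {x y : X} (hx : 0 ≤ x) (h : x ≤ y) : p x ≤ p y :=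
  hp.mono_abs x y (by rwa [abs_of_nonneg hx, abs_of_nonneg (hx.trans h)])

theorem map_inf_le_add (hp : IsLatticeSeminorm p) {c s t u : X} (hc : 0 ≤ c) (hs : 0 ≤ s)
    (ht : 0 ≤ t) (hu : 0 ≤ u) (h : c ≤ s + t) : p (c ⊓ u) ≤ p (s ⊓ u) + p (t ⊓ u) :=
  (hp.mono (le_inf hc hu) ((inf_le_inf_right u h).trans (add_inf_le_inf_add_inf hs ht hu))).trans
    (hp.add_le _ _)

theorem map_posPart_sub_nsmul_inf_le (hp : IsLatticeSeminorm p) {a u : X} (ha : 0 ≤ a)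
    (hu : 0 ≤ u) (n : ℕ) :
    p ((a - n • u)⁺ ⊓ u) ≤ p a / (n + 1) := by
  have h := hp.mono (nsmul_nonneg (le_inf (posPart_nonneg _) hu) _)
    (nsmul_posPart_sub_nsmul_inf_le ha hu n)
  rw [hp.map_nsmul] at h
  push_cast at h
  rw [le_div_iff₀ (by positivity), mul_comm]
  exact h

/-- Split `a` and `b` at the level `n • u`: the parts above it are small by the layer-cake
estimate. -/
theorem map_abs_sub_inf_le (hp : IsLatticeSeminorm p) {a b u : X} (ha : 0 ≤ a) (hb : 0 ≤ b)
    (hu : 0 ≤ u) (n : ℕ) :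
    p (|a - b| ⊓ u) ≤ p (a ⊓ n • u - b ⊓ n • u) + (p a + p b) / (n + 1) := by
  set v := n • u
  have h₁ := hp.map_inf_le_add (abs_nonneg _)
    (add_nonneg (abs_nonneg _) (posPart_nonneg _)) (posPart_nonneg _) hu
    (abs_sub_le_abs_inf_sub_inf_add a b v)
  have h₂ := hp.map_inf_le_add (add_nonneg (abs_nonneg _) (posPart_nonneg _))
    (abs_nonneg (a ⊓ v - b ⊓ v)) (posPart_nonneg (a - v)) hu le_rfl
  have h₃ := hp.mono (le_inf (abs_nonneg (a ⊓ v - b ⊓ v)) hu) inf_le_left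
  rw [hp.map_abs] at h₃
  have h₄ := hp.map_posPart_sub_nsmul_inf_le ha hu n
  have h₅ := hp.map_posPart_sub_nsmul_inf_le hb hu n
  rw [add_div]
  linarith

theorem tendsto_map_abs_sub_inf (hp : IsLatticeSeminorm p) {ι : Type*} {F : Filter ι} {a b : ι → X}
    (ha : ∀ i, 0 ≤ a i) (hb : ∀ i, 0 ≤ b i) {C : ℝ} (hC : ∀ i, p (a i) + p (b i) ≤ C)
    {u : X} (hu : 0 ≤ u) (h : ∀ n : ℕ, Tendsto (fun i => p (a i ⊓ n • u - b i ⊓ n • u)) F (𝓝 0)) :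
    Tendsto (fun i => p (|a i - b i| ⊓ u)) F (𝓝 0) := by
  refine tendsto_order.2 ⟨fun ε hε => Eventually.of_forall fun i => hε.trans_le (hp.nonneg _),
    fun ε hε => ?_⟩
  obtain ⟨n, hn⟩ := exists_nat_gt (2 * C / ε)
  have hCn : C / (n + 1) < ε / 2 := by
    rw [div_lt_iff₀ hε] at hn
    rw [div_lt_iff₀ (by positivity)]
    linarith
  filter_upwards [(h n).eventually (gt_mem_nhds (half_pos hε))] with i hi
  calc p (|a i - b i| ⊓ u) ≤ p (a i ⊓ n • u - b i ⊓ n • u) + (p (a i) + p (b i)) / (n + 1) :=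
        hp.map_abs_sub_inf_le (ha i) (hb i) hu n
    _ ≤ p (a i ⊓ n • u - b i ⊓ n • u) + C / (n + 1) := by gcongr; exact hC i
    _ < ε := by linarith

end IsLatticeSeminorm

section Convergence

variable {X : Type*} [AddCommGroup X] [Lattice X] {Λ : Type*} (m : Λ → X → ℝ)
  {α : Type*} [Preorder α]

def MCauchy (x : α → X) : Prop :=
  ∀ l, ∀ ε > (0:ℝ), ∃ N, ∀ a ≥ N, ∀ b ≥ N, m l (x a - x b) < ε

def MTendsto (x : α → X) (x₀ : X) : Prop :=
  ∀ l, Tendsto (fun a => m l (x a - x₀)) atTop (𝓝 0)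

def UMCauchy (x : α → X) : Prop :=
  ∀ u : X, 0 ≤ u → ∀ l, ∀ ε > (0:ℝ), ∃ N, ∀ a ≥ N, ∀ b ≥ N, m l (|x a - x b| ⊓ u) < ε

def UMTendsto (x : α → X) (x₀ : X) : Prop :=
  ∀ u : X, 0 ≤ u → ∀ l, Tendsto (fun a => m l (|x a - x₀| ⊓ u)) atTop (𝓝 0)

variable {m} [Module ℝ X] {x y : α → X} {a b : X}

theorem mTendsto_const (hm : ∀ l, IsLatticeSeminorm (m l)) (c : X) :
    MTendsto m (fun _ : α => c) c := fun l => by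
  simpa [(hm l).map_zero] using tendsto_const_nhds

theorem MTendsto.seminorm_le [Nonempty α] [IsDirected α (· ≤ ·)]
    (hm : ∀ l, IsLatticeSeminorm (m l)) (h : MTendsto m x a) {l : Λ} {M : ℝ}
    (hM : ∀ i, m l (x i) ≤ M) : m l a ≤ M :=
  ge_of_tendsto' (by simpa using (h l).const_add M) fun i => by
    linarith [(hm l).le_map_add_map_sub a (x i), (hm l).map_sub_comm a (x i), hM i]

variable [AddLeftMono X]

theorem umTendsto_const (hm : ∀ l, IsLatticeSeminorm (m l)) (c : X) :
    UMTendsto m (fun _ : α => c) c := fun u hu l => by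
  simpa [inf_eq_left.2 hu, (hm l).map_zero] using tendsto_const_nhds

theorem MTendsto.umTendsto (hm : ∀ l, IsLatticeSeminorm (m l)) (h : MTendsto m x a) :
    UMTendsto m x a := fun u hu l =>
  squeeze_zero (fun _ => (hm l).nonneg _) (fun i => (hm l).mono_abs _ _
    (by rw [abs_of_nonneg (le_inf (abs_nonneg _) hu)]; exact inf_le_left)) (h l)

theorem MTendsto.inf_const (hm : ∀ l, IsLatticeSeminorm (m l)) (h : MTendsto m x a) (c : X) :
    MTendsto m (fun i => x i ⊓ c) (a ⊓ c) := fun l =>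
  squeeze_zero (fun _ => (hm l).nonneg _)
    (fun _ => (hm l).mono_abs _ _ (abs_inf_sub_inf_le_abs _ _ _)) (h l)

theorem UMTendsto.sub (hm : ∀ l, IsLatticeSeminorm (m l)) (hx : UMTendsto m x a)
    (hy : UMTendsto m y b) : UMTendsto m (fun i => x i - y i) (a - b) := fun u hu l => by
  refine squeeze_zero (fun _ => (hm l).nonneg _) (fun i => (hm l).map_inf_le_add (abs_nonneg _)
    (abs_nonneg _) (abs_nonneg _) hu ?_) (by simpa using (hx u hu l).add (hy u hu l))
  rw [sub_sub_sub_comm, sub_eq_add_neg, ← abs_neg (y i - b)]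
  exact abs_add_le _ _

theorem UMTendsto.le [Nonempty α] [IsDirected α (· ≤ ·)] (hm : ∀ l, IsLatticeSeminorm (m l))
    (hsep : ∀ x : X, (∀ l, m l x = 0) → x = 0) (hx : UMTendsto m x a) (hy : UMTendsto m y b)
    (h : ∀ᶠ i in atTop, x i ≤ y i) : a ≤ b := by
  -- truncating at `c` itself: `c = c ⊓ c ≤ |x i - a| ⊓ c + |y i - b| ⊓ c`
  set c := (a - b)⁺
  rw [← sub_nonpos, ← posPart_eq_zero]
  refine hsep c fun l => le_antisymm ?_ ((hm l).nonneg c)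
  have hlim : Tendsto (fun i => m l (|x i - a| ⊓ c) + m l (|y i - b| ⊓ c)) atTop (𝓝 0) := by
    simpa using (hx c (posPart_nonneg _) l).add (hy c (posPart_nonneg _) l)
  refine ge_of_tendsto hlim ?_
  filter_upwards [h] with i hi
  have hab : a - b ≤ |x i - a| + |y i - b| := calc
    a - b = -(x i - a) + (x i - y i) + (y i - b) := by abel
    _ ≤ |x i - a| + 0 + |y i - b| :=
      add_le_add (add_le_add (neg_le_abs _) (sub_nonpos.2 hi)) (le_abs_self _)
    _ = |x i - a| + |y i - b| := by rw [add_zero]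
  simpa using (hm l).map_inf_le_add (c := c) (u := c) (posPart_nonneg _) (abs_nonneg _)
    (abs_nonneg _) (posPart_nonneg _) (sup_le hab (add_nonneg (abs_nonneg _) (abs_nonneg _)))

theorem MTendsto.le [Nonempty α] [IsDirected α (· ≤ ·)] (hm : ∀ l, IsLatticeSeminorm (m l))
    (hsep : ∀ x : X, (∀ l, m l x = 0) → x = 0) (hx : MTendsto m x a) (hy : MTendsto m y b)
    (h : ∀ i, x i ≤ y i) : a ≤ b :=
  (hx.umTendsto hm).le hm hsep (hy.umTendsto hm) (Eventually.of_forall h)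

theorem UMTendsto.isLUB_range [Nonempty α] [IsDirected α (· ≤ ·)]
    (hm : ∀ l, IsLatticeSeminorm (m l)) (hsep : ∀ x : X, (∀ l, m l x = 0) → x = 0)
    (h : UMTendsto m x a) (hx : Monotone x) : IsLUB (Set.range x) a := by
  refine ⟨?_, fun w hw => h.le hm hsep (umTendsto_const hm w)
    (Eventually.of_forall fun i => hw ⟨i, rfl⟩)⟩
  rintro _ ⟨i, rfl⟩
  exact (umTendsto_const hm (x i)).le hm hsep h ((eventually_ge_atTop i).mono fun j hj => hx hj)

theorem UMTendsto.isGLB_range [Nonempty α] [IsDirected α (· ≤ ·)]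
    (hm : ∀ l, IsLatticeSeminorm (m l)) (hsep : ∀ x : X, (∀ l, m l x = 0) → x = 0)
    (h : UMTendsto m x a) (hx : Antitone x) : IsGLB (Set.range x) a := by
  refine ⟨?_, fun w hw => (umTendsto_const hm w).le hm hsep h
    (Eventually.of_forall fun i => hw ⟨i, rfl⟩)⟩
  rintro _ ⟨i, rfl⟩
  exact h.le hm hsep (umTendsto_const hm (x i)) ((eventually_ge_atTop i).mono fun j hj => hx hj)

end Convergence

theorem tendsto_uncurry_atTop_nhds_zero_iff {β : Type*} [Preorder β] [Nonempty β]
    [IsDirected β (· ≤ ·)] {f : β → β → ℝ} (hf : ∀ b c, 0 ≤ f b c) :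
    Tendsto (Function.uncurry f) atTop (𝓝 0) ↔ ∀ ε > 0, ∃ N, ∀ b ≥ N, ∀ c ≥ N, f b c < ε := by
  rw [tendsto_order, and_iff_right fun ε hε => Eventually.of_forall fun q => hε.trans_le (hf _ _)]
  simp only [eventually_atTop_prod_self', Function.uncurry_apply_pair]

section Cauchy

variable {X : Type*} [AddCommGroup X] [Lattice X] [AddLeftMono X] [Module ℝ X]
  {Λ : Type*} {m : Λ → X → ℝ} {α : Type*} [Preorder α] {x y : α → X} {a : X}

theorem UMCauchy.of_abs_sub_le (hm : ∀ l, IsLatticeSeminorm (m l)) (hx : UMCauchy m x)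
    (h : ∀ i j, |y i - y j| ≤ |x i - x j|) : UMCauchy m y :=
  fun u hu l ε hε => (hx u hu l ε hε).imp fun _ hN i hi j hj =>
    ((hm l).mono (le_inf (abs_nonneg _) hu) (inf_le_inf_right u (h i j))).trans_lt (hN i hi j hj)

theorem UMCauchy.mCauchy_inf (hm : ∀ l, IsLatticeSeminorm (m l)) (hx : UMCauchy m x)
    (hx0 : ∀ i, 0 ≤ x i) {w : X} (hw : 0 ≤ w) : MCauchy m fun i => x i ⊓ w :=
  fun l ε hε => (hx w hw l ε hε).imp fun _ hN i hi j hj =>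
    ((hm l).mono_abs _ _ (by
      rw [abs_of_nonneg (le_inf (abs_nonneg _) hw)]
      exact abs_inf_sub_inf_le_inf (hx0 i) (hx0 j) hw)).trans_lt (hN i hi j hj)

theorem umCauchy_of_mCauchy_inf [Nonempty α] [IsDirected α (· ≤ ·)]
    (hm : ∀ l, IsLatticeSeminorm (m l)) (hx0 : ∀ i, 0 ≤ x i)
    (hxM : ∀ l, ∃ M : ℝ, ∀ i, m l (x i) ≤ M) (h : ∀ w, 0 ≤ w → MCauchy m fun i => x i ⊓ w) :
    UMCauchy m x := by
  intro u hu l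
  obtain ⟨M, hM⟩ := hxM l
  refine (tendsto_uncurry_atTop_nhds_zero_iff (f := fun i j => m l (|x i - x j| ⊓ u))
    fun _ _ => (hm l).nonneg _).1 ?_
  refine (hm l).tendsto_map_abs_sub_inf (a := fun q : α × α => x q.1) (b := fun q => x q.2)
    (fun q => hx0 q.1) (fun q => hx0 q.2) (C := M + M) (fun q => add_le_add (hM q.1) (hM q.2)) hu
    fun n => ?_
  exact (tendsto_uncurry_atTop_nhds_zero_iff (f := fun i j => m l (x i ⊓ n • u - x j ⊓ n • u))
    fun _ _ => (hm l).nonneg _).2 (h _ (nsmul_nonneg hu n) l)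

theorem umTendsto_of_mTendsto_inf (hm : ∀ l, IsLatticeSeminorm (m l)) (hx0 : ∀ i, 0 ≤ x i)
    (hxM : ∀ l, ∃ M : ℝ, ∀ i, m l (x i) ≤ M) (ha : 0 ≤ a)
    (h : ∀ w, 0 ≤ w → MTendsto m (fun i => x i ⊓ w) (a ⊓ w)) : UMTendsto m x a := by
  intro u hu l
  obtain ⟨M, hM⟩ := hxM l
  exact (hm l).tendsto_map_abs_sub_inf hx0 (fun _ => ha) (C := M + m l a)
    (fun i => add_le_add (hM i) le_rfl) hu fun n => h _ (nsmul_nonneg hu n) l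

end Cauchy

section Properties

variable {X : Type u} [AddCommGroup X] [Lattice X] {Λ : Type*} (m : Λ → X → ℝ)

def IsMComplete : Prop :=
  ∀ (α : Type u) [Preorder α] [Nonempty α] [IsDirected α (· ≤ ·)] (x : α → X),
    MCauchy m x → ∃ x₀, MTendsto m x x₀

def IsPreLebesgue : Prop :=
  ∀ (y : ℕ → X) (b : X), Monotone y → (∀ n, 0 ≤ y n) → (∀ n, y n ≤ b) → MCauchy m y

def IsLebesgue : Prop :=
  ∀ (α : Type u) [Preorder α] [Nonempty α] [IsDirected α (· ≤ ·)] (x : α → X),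
    Antitone x → IsGLB (Set.range x) 0 → ∀ l, Tendsto (fun a => m l (x a)) atTop (𝓝 0)

def IsLevi : Prop :=
  ∀ (α : Type u) [Preorder α] [Nonempty α] [IsDirected α (· ≤ ·)] (x : α → X),
    Monotone x → (∀ a, 0 ≤ x a) → (∀ l, ∃ M : ℝ, ∀ a, m l (x a) ≤ M) →
      ∃ s, IsLUB (Set.range x) s

def IsUMComplete (A : Set X) : Prop :=
  ∀ (β : Type u) [Preorder β] [Nonempty β] [IsDirected β (· ≤ ·)] (x : β → X),
    (∀ b, x b ∈ A) → UMCauchy m x → ∃ x₀ ∈ A, UMTendsto m x x₀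

end Properties

section Topology

variable {X : Type*} [AddCommGroup X] [Lattice X] [AddLeftMono X] [Module ℝ X]
  {Λ : Type*} {m : Λ → X → ℝ}

theorem UMTendsto.tendsto_umTop {α : Type*} [Preorder α] {x : α → X} {a : X}
    (hm : ∀ l, IsLatticeSeminorm (m l)) (h : UMTendsto m x a) :
    Tendsto x atTop (@nhds X (umTop m) a) := by
  refine TopologicalSpace.tendsto_nhds_generateFrom_iff.2 ?_
  rintro _ ⟨z, ε, l, u, -, hu, rfl⟩ (ha : m l (|a - z| ⊓ u) < ε)
  have hlim : Tendsto (fun i => m l (|x i - a| ⊓ u) + m l (|a - z| ⊓ u)) atTop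
      (𝓝 (m l (|a - z| ⊓ u))) := by
    simpa using (h u hu l).add_const (m l (|a - z| ⊓ u))
  filter_upwards [hlim.eventually (gt_mem_nhds ha)] with i hi
  refine ((hm l).map_inf_le_add (abs_nonneg _) (abs_nonneg _) (abs_nonneg _) hu ?_).trans_lt hi
  rw [← sub_add_sub_cancel (x i) a z]
  exact abs_add_le _ _

theorem isClosed_umTop_setOf_le (hm : ∀ l, IsLatticeSeminorm (m l)) (l : Λ) (C : ℝ) :
    IsClosed[umTop m] {y | m l y ≤ C} := by
  let := umTop m
  rw [← isOpen_compl_iff, isOpen_iff_forall_mem_open]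
  intro y (hy : ¬m l y ≤ C)
  rw [not_le] at hy
  refine ⟨{z | m l (|z - y| ⊓ |y|) < m l y - C}, ?_,
    TopologicalSpace.isOpen_generateFrom_of_mem ⟨y, _, l, |y|, sub_pos.2 hy, abs_nonneg y, rfl⟩,
    by simpa [inf_eq_left.2 (abs_nonneg y), (hm l).map_zero] using hy⟩
  intro z (hz : m l (|z - y| ⊓ |y|) < m l y - C) (hzC : m l z ≤ C)
  have hy_le : |y| ≤ |z| + |z - y| ⊓ |y| := by
    rw [add_inf]
    refine le_inf ?_ (le_add_of_nonneg_left (abs_nonneg z))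
    calc |y| = |z + (y - z)| := by rw [add_sub_cancel]
      _ ≤ |z| + |z - y| := by rw [← abs_sub_comm y z]; exact abs_add_le _ _
  have := ((hm l).mono (abs_nonneg y) hy_le).trans ((hm l).add_le _ _)
  rw [(hm l).map_abs, (hm l).map_abs] at this
  linarith

end Topology

section Main

variable {X : Type u} [AddCommGroup X] [Lattice X] [AddLeftMono X] [Module ℝ X]
  {Λ : Type*} {m : Λ → X → ℝ}

theorem IsPreLebesgue.mCauchy_of_monotone (hpre : IsPreLebesgue m)
    (hm : ∀ l, IsLatticeSeminorm (m l)) {α : Type*} [Preorder α] [Nonempty α]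
    [IsDirected α (· ≤ ·)] {y : α → X} (hy : Monotone y) {c : X} (hc : ∀ a, y a ≤ c) :
    MCauchy m y := by
  intro l ε hε
  by_contra! hfar
  have step (N : α) : ∃ d ≥ N, ε / 2 ≤ m l (y d - y N) := by
    obtain ⟨a, ha, b, hb, hab⟩ := hfar N
    obtain ⟨d, had, hbd⟩ := directed_of (· ≤ ·) a b
    have hle {e : α} (he : N ≤ e) (hed : e ≤ d) : m l (y d - y e) ≤ m l (y d - y N) :=
      (hm l).mono (sub_nonneg.2 (hy hed)) (sub_le_sub_left (hy he) _)
    have htri := (hm l).add_le (y d - y b) (y a - y d)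
    rw [sub_add_sub_cancel', (hm l).map_sub_comm (y a) (y d)] at htri
    exact ⟨d, ha.trans had, by linarith [hle ha had, hle hb hbd]⟩
  -- iterating `f` gives an increasing sequence along which `y` keeps jumping by `ε / 2`
  choose f hfN hf using step
  obtain ⟨a₀⟩ := ‹Nonempty α›
  have hsucc (k : ℕ) : f^[k + 1] a₀ = f (f^[k] a₀) := Function.iterate_succ_apply' f k a₀
  have hmono : Monotone fun k => f^[k] a₀ :=
    monotone_nat_of_le_succ fun k => (hsucc k).symm ▸ hfN _
  obtain ⟨N, hN⟩ := hpre (fun k => y (f^[k] a₀) - y a₀) (c - y a₀)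
    (fun i j hij => sub_le_sub_right (hy (hmono hij)) _)
    (fun k => sub_nonneg.2 (hy (hmono k.zero_le))) (fun k => sub_le_sub_right (hc _) _)
    l (ε / 2) (half_pos hε)
  have := hN (N + 1) N.le_succ N le_rfl
  rw [sub_sub_sub_cancel_right, hsucc] at this
  exact (hf _).not_gt this

theorem IsPreLebesgue.isLebesgue (hpre : IsPreLebesgue m) (hcomplete : IsMComplete m)
    (hm : ∀ l, IsLatticeSeminorm (m l)) (hsep : ∀ x : X, (∀ l, m l x = 0) → x = 0) :
    IsLebesgue m := by
  intro α _ _ _ x hx hx0 l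
  have hneg : MCauchy m fun a => -x a :=
    hpre.mCauchy_of_monotone hm (fun a b hab => neg_le_neg_iff.2 (hx hab)) (c := 0)
      fun a => Left.neg_nonpos_iff.2 (hx0.1 ⟨a, rfl⟩)
  obtain ⟨x₀, hx₀⟩ := hcomplete α x fun l ε hε => (hneg l ε hε).imp fun _ hN a ha b hb => by
    simpa only [neg_sub_neg] using hN b hb a ha
  obtain rfl : x₀ = 0 := ((hx₀.umTendsto hm).isGLB_range hm hsep hx).unique hx0
  simpa only [sub_zero] using hx₀ l

theorem UMCauchy.exists_umTendsto_of_nonneg (hlevi : IsLevi m) (hcomplete : IsMComplete m)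
    (hm : ∀ l, IsLatticeSeminorm (m l)) (hsep : ∀ x : X, (∀ l, m l x = 0) → x = 0)
    {β : Type u} [Preorder β] [Nonempty β] [IsDirected β (· ≤ ·)] {z : β → X}
    (hz : UMCauchy m z) (hz0 : ∀ b, 0 ≤ z b) (hzM : ∀ l, ∃ M : ℝ, ∀ b, m l (z b) ≤ M) :
    ∃ p, UMTendsto m z p := by
  choose t ht using fun w : {w : X // 0 ≤ w} => hcomplete β _ (hz.mCauchy_inf hm hz0 w.2)
  have ht0 (w : {w : X // 0 ≤ w}) : 0 ≤ t w :=
    (mTendsto_const hm 0).le hm hsep (ht w) fun b => le_inf (hz0 b) w.2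
  have ht_le (w : {w : X // 0 ≤ w}) : t w ≤ w :=
    (ht w).le hm hsep (mTendsto_const hm w.1) fun _ => inf_le_right
  have ht_mono : Monotone t := fun v w hvw =>
    (ht v).le hm hsep (ht w) fun _ => inf_le_inf_left _ hvw
  have : Nonempty {w : X // 0 ≤ w} := ⟨⟨0, le_rfl⟩⟩
  obtain ⟨p, hp⟩ := hlevi _ t ht_mono ht0 fun l => (hzM l).imp fun M hM w =>
    (ht w).seminorm_le hm fun b => ((hm l).mono (le_inf (hz0 b) w.2) inf_le_left).trans (hM b)
  have hpt (w : {w : X // 0 ≤ w}) : p ⊓ w = t w := by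
    refine le_antisymm ((hp.range_inf w.1).2 ?_) (le_inf (hp.1 ⟨w, rfl⟩) (ht_le w))
    rintro _ ⟨v, rfl⟩
    exact ((ht v).inf_const hm w.1).le hm hsep (ht w) fun _ => inf_le_inf_right _ inf_le_left
  refine ⟨p, umTendsto_of_mTendsto_inf hm hz0 hzM ((ht0 ⟨0, le_rfl⟩).trans (hp.1 ⟨_, rfl⟩))
    fun w hw => ?_⟩
  rw [hpt ⟨w, hw⟩]
  exact ht ⟨w, hw⟩

theorem IsLevi.isUMComplete (hlevi : IsLevi m) (hcomplete : IsMComplete m)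
    (hm : ∀ l, IsLatticeSeminorm (m l)) (hsep : ∀ x : X, (∀ l, m l x = 0) → x = 0)
    {A : Set X} (hA : ∀ l, ∃ M : ℝ, ∀ a ∈ A, m l a ≤ M) (hAcl : IsClosed[umTop m] A) :
    IsUMComplete m A := by
  let := umTop m
  intro β _ _ _ x hxA hx
  have hbdd {f : X → X} (hf : ∀ a, 0 ≤ f a ∧ f a ≤ |a|) : ∀ l, ∃ M : ℝ, ∀ b, m l (f (x b)) ≤ M :=
    fun l => (hA l).imp fun M hM b =>
      ((hm l).mono_abs _ _ (by rw [abs_of_nonneg (hf _).1]; exact (hf _).2)).trans (hM _ (hxA b))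
  obtain ⟨p, hp⟩ := (hx.of_abs_sub_le hm fun i j => abs_posPart_sub_posPart_le (x i) (x j))
    |>.exists_umTendsto_of_nonneg hlevi hcomplete hm hsep (fun _ => posPart_nonneg _)
      (hbdd fun a => ⟨posPart_nonneg a, posPart_le_abs a⟩)
  obtain ⟨q, hq⟩ := (hx.of_abs_sub_le hm fun i j => abs_negPart_sub_negPart_le (x i) (x j))
    |>.exists_umTendsto_of_nonneg hlevi hcomplete hm hsep (fun _ => negPart_nonneg _)
      (hbdd fun a => ⟨negPart_nonneg a, negPart_le_abs a⟩)
  have hpq : UMTendsto m x (p - q) := by simpa only [posPart_sub_negPart] using hp.sub hm hq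
  exact ⟨p - q, hAcl.mem_of_tendsto (hpq.tendsto_umTop hm) (Eventually.of_forall hxA), hpq⟩

theorem IsPreLebesgue.isLevi (hpre : IsPreLebesgue m) (hm : ∀ l, IsLatticeSeminorm (m l))
    (hsep : ∀ x : X, (∀ l, m l x = 0) → x = 0)
    (h : ∀ A : Set X, (∀ l, ∃ M : ℝ, ∀ a ∈ A, m l a ≤ M) → IsClosed[umTop m] A →
      IsUMComplete m A) :
    IsLevi m := by
  let := umTop m
  intro α _ _ _ x hx hx0 hxM
  choose M hM using hxM
  have hcauchy : UMCauchy m x := umCauchy_of_mCauchy_inf hm hx0 (fun l => ⟨M l, hM l⟩) fun w _ =>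
    hpre.mCauchy_of_monotone hm (fun a b hab => inf_le_inf_right w (hx hab)) fun _ => inf_le_right
  obtain ⟨x₀, -, hx₀⟩ := h (⋂ l, {y | m l y ≤ M l})
    (fun l => ⟨M l, fun a ha => Set.mem_iInter.1 ha l⟩)
    (isClosed_iInter fun l => isClosed_umTop_setOf_le hm l (M l)) α x
    (fun a => Set.mem_iInter.2 fun l => hM l a) hcauchy
  exact ⟨x₀, hx₀.isLUB_range hm hsep hx⟩

end Main

theorem stmt16_general {X : Type u} [AddCommGroup X] [Lattice X]
    [CovariantClass X X (· + ·) (· ≤ ·)] [Module ℝ X]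
    {Λ : Type*} (m : Λ → X → ℝ)
    (hadd : ∀ l (x y : X), m l (x + y) ≤ m l x + m l y)
    (hsmul : ∀ l (c : ℝ) (x : X), m l (c • x) = |c| * m l x)
    (hmono : ∀ l (x y : X), |x| ≤ |y| → m l x ≤ m l y)
    (hsep : ∀ x : X, (∀ l, m l x = 0) → x = 0)
    -- m-completeness (for nets)
    (hcomplete : ∀ (α : Type u) [Preorder α] [Nonempty α] [IsDirected α (· ≤ ·)]
        (x : α → X),
        (∀ l, ∀ ε > (0:ℝ), ∃ N, ∀ a ≥ N, ∀ b ≥ N, m l (x a - x b) < ε) →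
        ∃ x₀ : X, ∀ l, Tendsto (fun a => m l (x a - x₀)) atTop (𝓝 0))
    -- pre-Lebesgue property
    (hpreLeb : ∀ (y : ℕ → X) (b : X), Monotone y → (∀ n, 0 ≤ y n) → (∀ n, y n ≤ b) →
        ∀ l, ∀ ε > (0:ℝ), ∃ N, ∀ i ≥ N, ∀ j ≥ N, m l (y i - y j) < ε) :
    -- Lebesgue and Levi properties ...
    ((∀ (α : Type u) [Preorder α] [Nonempty α] [IsDirected α (· ≤ ·)] (x : α → X),
        Antitone x → IsGLB (Set.range x) 0 →
        ∀ l, Tendsto (fun a => m l (x a)) atTop (𝓝 0)) ∧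
     (∀ (α : Type u) [Preorder α] [Nonempty α] [IsDirected α (· ≤ ·)] (x : α → X),
        Monotone x → (∀ a, 0 ≤ x a) → (∀ l, ∃ M : ℝ, ∀ a, m l (x a) ≤ M) →
        ∃ s : X, IsLUB (Set.range x) s)) ↔
    -- ... iff every m-bounded um-closed set is um-complete
    (∀ A : Set X, (∀ l, ∃ M : ℝ, ∀ a ∈ A, m l a ≤ M) → @IsClosed X (umTop m) A →
      ∀ (β : Type u) [Preorder β] [Nonempty β] [IsDirected β (· ≤ ·)] (x : β → X),
        (∀ b, x b ∈ A) →
        (∀ u : X, 0 ≤ u → ∀ l, ∀ ε > (0:ℝ), ∃ N, ∀ b ≥ N, ∀ c ≥ N,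
            m l (|x b - x c| ⊓ u) < ε) →
        ∃ x₀ ∈ A, ∀ u : X, 0 ≤ u → ∀ l,
            Tendsto (fun b => m l (|x b - x₀| ⊓ u)) atTop (𝓝 0)) := by
  have hm : ∀ l, IsLatticeSeminorm (m l) := fun l => ⟨hadd l, hsmul l, hmono l⟩
  have hleb : IsLebesgue m := IsPreLebesgue.isLebesgue hpreLeb hcomplete hm hsep
  exact ⟨fun h A hA hAcl => IsLevi.isUMComplete h.2 hcomplete hm hsep hA hAcl,
    fun h => ⟨hleb, IsPreLebesgue.isLevi hpreLeb hm hsep h⟩⟩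

/-- Let `(X, M)` be an m-complete MNVL with the pre-Lebesgue property.
Then `X` has the Lebesgue and Levi properties iff every m-bounded um-closed subset of `X`
is um-complete. -/
theorem stmt16 {X : Type u} [AddCommGroup X] [Lattice X]
    [CovariantClass X X (· + ·) (· ≤ ·)] [Module ℝ X]
    {Λ : Type*} (m : Λ → X → ℝ)
    (hadd : ∀ l (x y : X), m l (x + y) ≤ m l x + m l y)
    (hsmul : ∀ l (c : ℝ) (x : X), m l (c • x) = |c| * m l x)
    (hmono : ∀ l (x y : X), |x| ≤ |y| → m l x ≤ m l y)
    (hsep : ∀ x : X, (∀ l, m l x = 0) → x = 0)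
    (hdir : ∀ l₁ l₂, ∃ l₃, ∀ x : X, m l₁ x ≤ m l₃ x ∧ m l₂ x ≤ m l₃ x)
    -- m-completeness (for nets)
    (hcomplete : ∀ (α : Type u) [Preorder α] [Nonempty α] [IsDirected α (· ≤ ·)]
        (x : α → X),
        (∀ l, ∀ ε > (0:ℝ), ∃ N, ∀ a ≥ N, ∀ b ≥ N, m l (x a - x b) < ε) →
        ∃ x₀ : X, ∀ l, Tendsto (fun a => m l (x a - x₀)) atTop (𝓝 0))
    -- pre-Lebesgue property
    (hpreLeb : ∀ (y : ℕ → X) (b : X), Monotone y → (∀ n, 0 ≤ y n) → (∀ n, y n ≤ b) →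
        ∀ l, ∀ ε > (0:ℝ), ∃ N, ∀ i ≥ N, ∀ j ≥ N, m l (y i - y j) < ε) :
    -- Lebesgue and Levi properties ...
    ((∀ (α : Type u) [Preorder α] [Nonempty α] [IsDirected α (· ≤ ·)] (x : α → X),
        Antitone x → IsGLB (Set.range x) 0 →
        ∀ l, Tendsto (fun a => m l (x a)) atTop (𝓝 0)) ∧
     (∀ (α : Type u) [Preorder α] [Nonempty α] [IsDirected α (· ≤ ·)] (x : α → X),
        Monotone x → (∀ a, 0 ≤ x a) → (∀ l, ∃ M : ℝ, ∀ a, m l (x a) ≤ M) →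
        ∃ s : X, IsLUB (Set.range x) s)) ↔
    -- ... iff every m-bounded um-closed set is um-complete
    (∀ A : Set X, (∀ l, ∃ M : ℝ, ∀ a ∈ A, m l a ≤ M) → @IsClosed X (umTop m) A →
      ∀ (β : Type u) [Preorder β] [Nonempty β] [IsDirected β (· ≤ ·)] (x : β → X),
        (∀ b, x b ∈ A) →
        (∀ u : X, 0 ≤ u → ∀ l, ∀ ε > (0:ℝ), ∃ N, ∀ b ≥ N, ∀ c ≥ N,
            m l (|x b - x c| ⊓ u) < ε) →
        ∃ x₀ ∈ A, ∀ u : X, 0 ≤ u → ∀ l,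
            Tendsto (fun b => m l (|x b - x₀| ⊓ u)) atTop (𝓝 0)) :=
  stmt16_general m hadd hsmul hmono hsep hcomplete hpreLeb
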